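/- arXiv:2301.11296 — 3 statements merged into one kernel-verified Lean document; each statement's English description precedes it below -/
import Mathlib

section
/- In a BOMDP sliced at frontier observations F (where all states with observation in F are made absorbing), the winning region satisfies the sandwich property: Win(slice, T) ⊆ Win(full, T) ⊆ Win(slice, T ∪ F), where Win denotes the set of observations from which an observation-based policy almost-surely reaches the target set. -/
open scoped Classical

/-- Probability of reaching the target set `T` within `n` steps, starting
from state `s` with history `h`, under transition kernel `p` and
(history-dependent, randomized) policy `σ`. The probability of reaching `T`
is the supremum over `n` of these step-bounded probabilities. -/
noncomputable def reachN {S A : Type*} [Fintype S] [Fintype A]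
    (p : S → A → S → ℝ) (σ : List S → A → ℝ) (T : Set S) :
    ℕ → List S → S → ℝ
  | 0, _, s => if s ∈ T then 1 else 0
  | n + 1, h, s =>
      if s ∈ T then 1
      else ∑ a, σ (h ++ [s]) a * ∑ s', p s a s' * reachN p σ T n (h ++ [s]) s'

/-- A randomized history-dependent policy: a probability distribution over
actions for every history. -/
def IsPolicy {S A : Type*} [Fintype A] (σ : List S → A → ℝ) : Prop :=
  ∀ h : List S, (∀ a, 0 ≤ σ h a) ∧ ∑ a, σ h a = 1

/-- A stochastic transition kernel. -/
def IsKernel {S A : Type*} [Fintype S] (p : S → A → S → ℝ) : Prop :=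
  ∀ s a, (∀ s', 0 ≤ p s a s') ∧ ∑ s', p s a s' = 1

/-- A policy is observation-based if it takes the same decision on paths with
identical observation traces. -/
def ObsBased {S A Z : Type*} (O : S → Z) (σ : List S → A → ℝ) : Prop :=
  ∀ h h' : List S, h.map O = h'.map O → σ h = σ h'

/-- The winning region of a BOMDP: the set of observations `z` such that some
observation-based policy almost-surely reaches the target observations `T`
from every state with observation `z`. -/
noncomputable def Win {S A Z : Type*} [Fintype S] [Fintype A]
    (p : S → A → S → ℝ) (O : S → Z) (T : Set Z) : Set Z :=
  {z | ∃ σ : List S → A → ℝ, IsPolicy σ ∧ ObsBased O σ ∧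
    ∀ s : S, O s = z → (⨆ n, reachN p σ {s' | O s' ∈ T} n [] s) = 1}

/-- The transition kernel of the BOMDP sliced at the frontier observations
`F`: every state whose observation lies in `F` is made absorbing. -/
noncomputable def sliceKernel {S A Z : Type*} (p : S → A → S → ℝ) (O : S → Z)
    (F : Set Z) : S → A → S → ℝ :=
  fun s a s' => if O s ∈ F then (if s' = s then 1 else 0) else p s a s'

section aux
variable {S A Z : Type*} [Fintype S] [Fintype A]

lemma sliceKernel_isKernel (p : S → A → S → ℝ) (hp : IsKernel p) (O : S → Z)
    (F : Set Z) : IsKernel (sliceKernel p O F) := by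
  intro s a
  constructor
  · intro s'
    unfold sliceKernel
    split
    · split <;> norm_num
    · exact (hp s a).1 s'
  · unfold sliceKernel
    split
    · simp
    · exact (hp s a).2

lemma reachN_nonneg (p : S → A → S → ℝ) (hp : IsKernel p)
    (σ : List S → A → ℝ) (hσ : IsPolicy σ) (T : Set S) :
    ∀ n (h : List S) (s : S), 0 ≤ reachN p σ T n h s := by
  intro n
  induction n with
  | zero =>
    intro h s
    by_cases hs : s ∈ T <;> simp [reachN, hs]
  | succ n ih =>
    intro h s
    by_cases hs : s ∈ T
    · simp [reachN, hs]
    · simp only [reachN, hs, if_false]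
      refine Finset.sum_nonneg fun a _ => mul_nonneg ((hσ _).1 a) ?_
      exact Finset.sum_nonneg fun s' _ => mul_nonneg ((hp s a).1 s') (ih _ s')

lemma reachN_le_one (p : S → A → S → ℝ) (hp : IsKernel p)
    (σ : List S → A → ℝ) (hσ : IsPolicy σ) (T : Set S) :
    ∀ n (h : List S) (s : S), reachN p σ T n h s ≤ 1 := by
  intro n
  induction n with
  | zero =>
    intro h s
    by_cases hs : s ∈ T <;> simp [reachN, hs]
  | succ n ih =>
    intro h s
    by_cases hs : s ∈ T
    · simp [reachN, hs]
    · simp only [reachN, hs, if_false]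
      calc ∑ a, σ (h ++ [s]) a * ∑ s', p s a s' * reachN p σ T n (h ++ [s]) s'
          ≤ ∑ a, σ (h ++ [s]) a * 1 := by
            refine Finset.sum_le_sum fun a _ => mul_le_mul_of_nonneg_left ?_ ((hσ _).1 a)
            calc ∑ s', p s a s' * reachN p σ T n (h ++ [s]) s'
                ≤ ∑ s', p s a s' * 1 :=
                  Finset.sum_le_sum fun s' _ =>
                    mul_le_mul_of_nonneg_left (ih _ s') ((hp s a).1 s')
              _ = 1 := by simp [(hp s a).2]
        _ = 1 := by simp [(hσ (h ++ [s])).2]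

lemma reachN_absorbing_zero (p : S → A → S → ℝ)
    (σ : List S → A → ℝ) (hσ : IsPolicy σ) (O : S → Z) (F : Set Z) (T : Set S)
    {s : S} (hF : O s ∈ F) (hT : s ∉ T) :
    ∀ n (h : List S), reachN (sliceKernel p O F) σ T n h s = 0 := by
  intro n
  induction n with
  | zero => intro h; simp [reachN, hT]
  | succ n ih =>
    intro h
    simp only [reachN, hT, if_false]
    have : ∀ a, (∑ s', sliceKernel p O F s a s' * reachN (sliceKernel p O F) σ T n (h ++ [s]) s') = 0 := by
      intro a
      have : ∀ s', sliceKernel p O F s a s' * reachN (sliceKernel p O F) σ T n (h ++ [s]) s'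
          = (if s' = s then reachN (sliceKernel p O F) σ T n (h ++ [s]) s' else 0) := by
        intro s'
        simp only [sliceKernel, hF, if_true]
        split <;> simp
      rw [Finset.sum_congr rfl fun s' _ => this s', Finset.sum_ite_eq' Finset.univ s]
      simp [ih]
    simp [this]

lemma reach_slice_le (p : S → A → S → ℝ) (hp : IsKernel p)
    (σ : List S → A → ℝ) (hσ : IsPolicy σ) (O : S → Z) (F : Set Z) (T : Set S) :
    ∀ n (h : List S) (s : S),
      reachN (sliceKernel p O F) σ T n h s ≤ reachN p σ T n h s := by
  intro n
  induction n with
  | zero => intro h s; simp [reachN]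
  | succ n ih =>
    intro h s
    by_cases hs : s ∈ T
    · simp [reachN, hs]
    · by_cases hF : O s ∈ F
      · have h0 := reachN_absorbing_zero p σ hσ O F T hF hs (n+1) h
        rw [h0]
        exact reachN_nonneg p hp σ hσ T _ _ _
      · simp only [reachN, hs, if_false]
        refine Finset.sum_le_sum fun a _ => mul_le_mul_of_nonneg_left ?_ ((hσ _).1 a)
        refine Finset.sum_le_sum fun s' _ => ?_
        have hk : sliceKernel p O F s a s' = p s a s' := by simp [sliceKernel, hF]
        rw [hk]
        exact mul_le_mul_of_nonneg_left (ih _ s') ((hp s a).1 s')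

lemma reach_le_slice_union (p : S → A → S → ℝ) (hp : IsKernel p)
    (σ : List S → A → ℝ) (hσ : IsPolicy σ) (O : S → Z) (F T : Set Z) :
    ∀ n (h : List S) (s : S),
      reachN p σ {s' | O s' ∈ T} n h s ≤
        reachN (sliceKernel p O F) σ {s' | O s' ∈ T ∪ F} n h s := by
  intro n
  induction n with
  | zero =>
    intro h s
    by_cases hs : O s ∈ T
    · simp [reachN, hs, Set.mem_union, hs]
    · by_cases hF : O s ∈ F <;>
        simp [reachN, hs, Set.mem_union, hF]
  | succ n ih =>
    intro h s
    by_cases hs2 : O s ∈ T ∪ F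
    · have hmem : s ∈ {s' | O s' ∈ T ∪ F} := hs2
      have hR : reachN (sliceKernel p O F) σ {s' | O s' ∈ T ∪ F} (n+1) h s = 1 := by
        simp only [reachN, if_pos hmem]
      rw [hR]
      exact reachN_le_one p hp σ hσ _ _ _ _
    · have hsT : O s ∉ T := fun hh => hs2 (Or.inl hh)
      have hsF : O s ∉ F := fun hh => hs2 (Or.inr hh)
      have h1 : s ∉ {s' | O s' ∈ T} := hsT
      have h2 : s ∉ {s' | O s' ∈ T ∪ F} := hs2
      simp only [reachN, h1, h2, if_false]
      refine Finset.sum_le_sum fun a _ => mul_le_mul_of_nonneg_left ?_ ((hσ _).1 a)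
      refine Finset.sum_le_sum fun s' _ => ?_
      have hk : sliceKernel p O F s a s' = p s a s' := by simp [sliceKernel, hsF]
      rw [hk]
      exact mul_le_mul_of_nonneg_left (ih _ s') ((hp s a).1 s')

end aux

/-- Sandwich property of slicing:
`Win(sliceKernel, T) ⊆ Win(full, T) ⊆ Win(sliceKernel, T ∪ F)`. -/
theorem sliced_win_sandwich {S A Z : Type*} [Fintype S] [Fintype A]
    (p : S → A → S → ℝ) (hp : IsKernel p) (O : S → Z) (F T : Set Z) :
    Win (sliceKernel p O F) O T ⊆ Win p O T ∧
      Win p O T ⊆ Win (sliceKernel p O F) O (T ∪ F) := by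
  have hps := sliceKernel_isKernel p hp O F
  constructor
  · rintro z ⟨σ, hσ, hobs, hwin⟩
    refine ⟨σ, hσ, hobs, fun s hs => ?_⟩
    refine le_antisymm (ciSup_le fun n => reachN_le_one p hp σ hσ _ n [] s) ?_
    rw [← hwin s hs]
    refine ciSup_mono ⟨1, ?_⟩ fun n => reach_slice_le p hp σ hσ O F _ n [] s
    rintro x ⟨n, rfl⟩
    exact reachN_le_one p hp σ hσ _ n [] s
  · rintro z ⟨σ, hσ, hobs, hwin⟩
    refine ⟨σ, hσ, hobs, fun s hs => ?_⟩
    refine le_antisymm (ciSup_le fun n => reachN_le_one _ hps σ hσ _ n [] s) ?_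
    rw [← hwin s hs]
    refine ciSup_mono ⟨1, ?_⟩ fun n => reach_le_slice_union p hp σ hσ O F T n [] s
    rintro x ⟨n, rfl⟩
    exact reachN_le_one _ hps σ hσ _ n [] s
end

section
/- Implicit slicing preserves winning regions: if W is a subset of the winning region of a belief support game 𝔅 with target T and L is disjoint from the winning region, then the winning region of 𝔅 equals the winning region of the game obtained from 𝔅 by making all states in W ∪ L absorbing, with target T ∪ W. -/
open scoped Classical

/-- Step-bounded probability of reaching `T` in a stochastic game with
Player-1 states `P1` (Player 2 owns the remaining states), under policies
`σ₁` (used at Player-1 states) and `σ₂` (used at Player-2 states). -/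
noncomputable def gReachN {S A : Type*} [Fintype S] [Fintype A]
    (p : S → A → S → ℝ) (P1 : Set S) (σ₁ σ₂ : List S → A → ℝ) (T : Set S) :
    ℕ → List S → S → ℝ
  | 0, _, s => if s ∈ T then 1 else 0
  | n + 1, h, s =>
      if s ∈ T then 1
      else ∑ a, (if s ∈ P1 then σ₁ (h ++ [s]) a else σ₂ (h ++ [s]) a) *
        ∑ s', p s a s' * gReachN p P1 σ₁ σ₂ T n (h ++ [s]) s'

/-- The winning region of a stochastic game: states from which Player 1 has a
policy reaching `T` with probability `1` against every Player-2 policy. -/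
noncomputable def GWin {S A : Type*} [Fintype S] [Fintype A]
    (p : S → A → S → ℝ) (P1 : Set S) (T : Set S) : Set S :=
  {s | ∃ σ₁ : List S → A → ℝ, IsPolicy σ₁ ∧
    ∀ σ₂ : List S → A → ℝ, IsPolicy σ₂ →
      (⨆ n, gReachN p P1 σ₁ σ₂ T n [] s) = 1}

/-- The kernel with every state of `C` made absorbing. -/
noncomputable def absorbOn {S A : Type*} (p : S → A → S → ℝ) (C : Set S) :
    S → A → S → ℝ :=
  fun s a s' => if s ∈ C then (if s' = s then 1 else 0) else p s a s'

set_option linter.unusedSectionVars false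
set_option linter.unusedVariables false
set_option maxHeartbeats 1000000

section Helpers
variable {S A : Type*} [Fintype S] [Fintype A]
variable {p : S → A → S → ℝ} {P1 T : Set S} {σ₁ σ₂ : List S → A → ℝ}

lemma mix_nonneg (h₁ : IsPolicy σ₁) (h₂ : IsPolicy σ₂) (s : S) (g : List S) (a : A) :
    0 ≤ (if s ∈ P1 then σ₁ g a else σ₂ g a) := by
  by_cases hs : s ∈ P1 <;> simp [hs, (h₁ g).1 a, (h₂ g).1 a]

lemma mix_sum (h₁ : IsPolicy σ₁) (h₂ : IsPolicy σ₂) (s : S) (g : List S) :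
    ∑ a, (if s ∈ P1 then σ₁ g a else σ₂ g a) = 1 := by
  by_cases hs : s ∈ P1 <;> simp [hs, (h₁ g).2, (h₂ g).2]

lemma gReachN_nonneg (hp : IsKernel p) (h₁ : IsPolicy σ₁) (h₂ : IsPolicy σ₂) :
    ∀ (n : ℕ) (h : List S) (s : S), 0 ≤ gReachN p P1 σ₁ σ₂ T n h s := by
  intro n
  induction n with
  | zero => intro h s; simp only [gReachN]; positivity
  | succ n ih =>
    intro h s
    simp only [gReachN]
    by_cases hs : s ∈ T
    · simp [hs]
    · simp only [hs, if_false]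
      apply Finset.sum_nonneg
      intro a _
      apply mul_nonneg (mix_nonneg h₁ h₂ s _ a)
      apply Finset.sum_nonneg
      intro s' _
      exact mul_nonneg ((hp s a).1 s') (ih _ _)

lemma gReachN_le_one (hp : IsKernel p) (h₁ : IsPolicy σ₁) (h₂ : IsPolicy σ₂) :
    ∀ (n : ℕ) (h : List S) (s : S), gReachN p P1 σ₁ σ₂ T n h s ≤ 1 := by
  intro n
  induction n with
  | zero => intro h s; simp only [gReachN]; split <;> norm_num
  | succ n ih =>
    intro h s
    simp only [gReachN]
    by_cases hs : s ∈ T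
    · simp [hs]
    · simp only [hs, if_false]
      calc ∑ a, (if s ∈ P1 then σ₁ (h ++ [s]) a else σ₂ (h ++ [s]) a) *
            ∑ s', p s a s' * gReachN p P1 σ₁ σ₂ T n (h ++ [s]) s'
          ≤ ∑ a, (if s ∈ P1 then σ₁ (h ++ [s]) a else σ₂ (h ++ [s]) a) * 1 := by
            apply Finset.sum_le_sum
            intro a _
            apply mul_le_mul_of_nonneg_left _ (mix_nonneg h₁ h₂ s _ a)
            calc ∑ s', p s a s' * gReachN p P1 σ₁ σ₂ T n (h ++ [s]) s'
                ≤ ∑ s', p s a s' * 1 := by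
                  apply Finset.sum_le_sum
                  intro s' _
                  exact mul_le_mul_of_nonneg_left (ih _ _) ((hp s a).1 s')
              _ = 1 := by simp [(hp s a).2]
        _ = 1 := by simp [mix_sum h₁ h₂ s]

lemma gReachN_of_mem {s : S} (hs : s ∈ T) :
    ∀ (n : ℕ) (h : List S), gReachN p P1 σ₁ σ₂ T n h s = 1 := by
  intro n h
  cases n <;> simp [gReachN, hs]

end Helpers

section Helpers2
variable {S A : Type*} [Fintype S] [Fintype A]
variable {p : S → A → S → ℝ} {P1 T : Set S} {σ₁ σ₂ : List S → A → ℝ}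

lemma gReachN_succ_le (hp : IsKernel p) (h₁ : IsPolicy σ₁) (h₂ : IsPolicy σ₂) :
    ∀ (n : ℕ) (h : List S) (s : S),
      gReachN p P1 σ₁ σ₂ T n h s ≤ gReachN p P1 σ₁ σ₂ T (n + 1) h s := by
  intro n
  induction n with
  | zero =>
    intro h s
    by_cases hs : s ∈ T
    · simp [gReachN, hs]
    · simp only [gReachN, hs, if_false]
      apply Finset.sum_nonneg; intro a _
      apply mul_nonneg (mix_nonneg h₁ h₂ s _ a)
      apply Finset.sum_nonneg; intro s' _
      apply mul_nonneg ((hp s a).1 s')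
      exact gReachN_nonneg (P1 := P1) hp h₁ h₂ 0 (h ++ [s]) s'
  | succ n ih =>
    intro h s
    by_cases hs : s ∈ T
    · simp [gReachN, hs]
    · simp only [gReachN, hs, if_false]
      apply Finset.sum_le_sum; intro a _
      apply mul_le_mul_of_nonneg_left _ (mix_nonneg h₁ h₂ s _ a)
      apply Finset.sum_le_sum; intro s' _
      exact mul_le_mul_of_nonneg_left (ih _ _) ((hp s a).1 s')

lemma gReachN_mono (hp : IsKernel p) (h₁ : IsPolicy σ₁) (h₂ : IsPolicy σ₂)
    (h : List S) (s : S) :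
    Monotone (fun n => gReachN p P1 σ₁ σ₂ T n h s) :=
  monotone_nat_of_le_succ fun n => gReachN_succ_le hp h₁ h₂ n h s

lemma gReachN_bddAbove (hp : IsKernel p) (h₁ : IsPolicy σ₁) (h₂ : IsPolicy σ₂)
    (h : List S) (s : S) :
    BddAbove (Set.range fun n => gReachN p P1 σ₁ σ₂ T n h s) :=
  ⟨1, by rintro x ⟨n, rfl⟩; exact gReachN_le_one hp h₁ h₂ n h s⟩

lemma gReachN_iSup_le_one (hp : IsKernel p) (h₁ : IsPolicy σ₁) (h₂ : IsPolicy σ₂)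
    (h : List S) (s : S) :
    (⨆ n, gReachN p P1 σ₁ σ₂ T n h s) ≤ 1 :=
  ciSup_le fun n => gReachN_le_one hp h₁ h₂ n h s

lemma gReachN_shift :
    ∀ (n : ℕ) (h₀ h : List S) (s : S),
      gReachN p P1 σ₁ σ₂ T n (h₀ ++ h) s =
        gReachN p P1 (fun g => σ₁ (h₀ ++ g)) (fun g => σ₂ (h₀ ++ g)) T n h s := by
  intro n
  induction n with
  | zero => intro h₀ h s; simp [gReachN]
  | succ n ih =>
    intro h₀ h s
    by_cases hs : s ∈ T
    · simp [gReachN, hs]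
    · simp only [gReachN, hs, if_false]
      apply Finset.sum_congr rfl
      intro a _
      rw [List.append_assoc]
      congr 1
      apply Finset.sum_congr rfl
      intro s' _
      rw [ih h₀ (h ++ [s]) s']

lemma gReachN_congr :
    ∀ (n : ℕ) (h : List S) (s : S) (σ₁' σ₂' : List S → A → ℝ),
      (∀ g, (h ++ [s]) <+: g → (∀ x ∈ g.drop h.length, x ∉ T) → σ₁ g = σ₁' g) →
      (∀ g, (h ++ [s]) <+: g → (∀ x ∈ g.drop h.length, x ∉ T) → σ₂ g = σ₂' g) →
      gReachN p P1 σ₁ σ₂ T n h s = gReachN p P1 σ₁' σ₂' T n h s := by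
  intro n
  induction n with
  | zero => intro h s σ₁' σ₂' _ _; simp [gReachN]
  | succ n ih =>
    intro h s σ₁' σ₂' hh1 hh2
    by_cases hs : s ∈ T
    · simp [gReachN, hs]
    · have hdropself : ((h ++ [s]).drop h.length) = [s] := by
        simp
      have hkey : ∀ g : List S, ((h ++ [s]) ++ [s]) <+: g → False ∨ True := fun _ _ => Or.inr trivial
      simp only [gReachN, hs, if_false]
      apply Finset.sum_congr rfl
      intro a _
      have e1 : σ₁ (h ++ [s]) = σ₁' (h ++ [s]) := by
        apply hh1 _ (List.prefix_refl _)
        rw [hdropself]; intro x hx; simp at hx; subst hx; exact hs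
      have e2 : σ₂ (h ++ [s]) = σ₂' (h ++ [s]) := by
        apply hh2 _ (List.prefix_refl _)
        rw [hdropself]; intro x hx; simp at hx; subst hx; exact hs
      rw [e1, e2]
      congr 1
      apply Finset.sum_congr rfl
      intro s' _
      have step : ∀ (τ τ' : List S → A → ℝ),
          (∀ g, (h ++ [s]) <+: g → (∀ x ∈ g.drop h.length, x ∉ T) → τ g = τ' g) →
          (∀ g, ((h ++ [s]) ++ [s']) <+: g →
            (∀ x ∈ g.drop (h ++ [s]).length, x ∉ T) → τ g = τ' g) := by
        intro τ τ' hτ g hpre hdrop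
        obtain ⟨t, rfl⟩ := hpre
        apply hτ
        · exact (List.prefix_append _ _).trans ⟨t, rfl⟩
        · have h1 : ((h ++ [s]) ++ [s'] ++ t).drop h.length = s :: ([s'] ++ t) := by
            have : (h ++ [s]) ++ [s'] ++ t = h ++ (s :: ([s'] ++ t)) := by simp
            rw [this, List.drop_left]
          have h2 : ((h ++ [s]) ++ [s'] ++ t).drop (h ++ [s]).length = [s'] ++ t := by
            have : (h ++ [s]) ++ [s'] ++ t = (h ++ [s]) ++ ([s'] ++ t) := by simp
            rw [this, List.drop_left]
          rw [h1]
          intro x hx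
          rcases List.mem_cons.mp hx with rfl | hx
          · exact hs
          · exact hdrop x (h2 ▸ hx)
      rw [ih (h ++ [s]) s' σ₁' σ₂' (step σ₁ σ₁' hh1) (step σ₂ σ₂' hh2)]

end Helpers2

section Helpers3
variable {S A : Type*} [Fintype S] [Fintype A]
variable {p : S → A → S → ℝ} {P1 T : Set S} {σ₁ σ₂ : List S → A → ℝ}

lemma absorbOn_isKernel (hp : IsKernel p) (C : Set S) : IsKernel (absorbOn p C) := by
  intro s a
  constructor
  · intro s'
    simp only [absorbOn]
    split
    · split <;> norm_num
    · exact (hp s a).1 s'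
  · by_cases hs : s ∈ C
    · simp [absorbOn, hs]
    · simp [absorbOn, hs, (hp s a).2]

lemma absorbOn_eq_of_not_mem {C : Set S} {s : S} (hs : s ∉ C) (a : A) :
    absorbOn p C s a = p s a := by
  funext s'; simp [absorbOn, hs]

/-- value at an absorbing non-target state is 0 -/
lemma gReachN_absorb_zero (h₁ : IsPolicy σ₁) (h₂ : IsPolicy σ₂) {C Tgt : Set S}
    {s : S} (hsC : s ∈ C) (hsT : s ∉ Tgt) :
    ∀ (n : ℕ) (h : List S), gReachN (absorbOn p C) P1 σ₁ σ₂ Tgt n h s = 0 := by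
  intro n
  induction n with
  | zero => intro h; simp [gReachN, hsT]
  | succ n ih =>
    intro h
    simp only [gReachN, hsT, if_false]
    have : ∀ a : A, ∑ s', absorbOn p C s a s' *
        gReachN (absorbOn p C) P1 σ₁ σ₂ Tgt n (h ++ [s]) s' = 0 := by
      intro a
      have : ∀ s', absorbOn p C s a s' * gReachN (absorbOn p C) P1 σ₁ σ₂ Tgt n (h ++ [s]) s'
          = if s' = s then gReachN (absorbOn p C) P1 σ₁ σ₂ Tgt n (h ++ [s]) s' else 0 := by
        intro s'
        simp only [absorbOn, hsC, if_true]
        split <;> simp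
      rw [Finset.sum_congr rfl fun s' _ => this s']
      simp [ih]
    simp [this]

lemma gReachN_target_empty {Tgt : Set S} (hT : ∀ x, x ∉ Tgt) :
    ∀ (n : ℕ) (h : List S) (s : S), gReachN p P1 σ₁ σ₂ Tgt n h s = 0 := by
  intro n
  induction n with
  | zero => intro h s; simp [gReachN, hT s]
  | succ n ih => intro h s; simp [gReachN, hT s, ih]

/-- key comparison: original value ≤ sliced value + (hit L∖T before T) value -/
lemma gReachN_compare (hp : IsKernel p) (h₁ : IsPolicy σ₁) (h₂ : IsPolicy σ₂)
    (W L : Set S) :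
    ∀ (n : ℕ) (h : List S) (s : S),
      gReachN p P1 σ₁ σ₂ T n h s ≤
        gReachN (absorbOn p (W ∪ L)) P1 σ₁ σ₂ (T ∪ W) n h s +
        gReachN (absorbOn p T) P1 σ₁ σ₂ (L \ T) n h s := by
  intro n
  induction n with
  | zero =>
    intro h s
    by_cases hs : s ∈ T
    · have : s ∈ T ∪ W := Or.inl hs
      simp only [gReachN, hs, if_true, this]
      have := gReachN_nonneg (p := absorbOn p T) (P1 := P1) (T := L \ T)
        (absorbOn_isKernel hp T) h₁ h₂ 0 h s
      simp only [gReachN] at this ⊢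
      split <;> linarith
    · simp only [gReachN, hs, if_false]
      split_ifs <;> norm_num
  | succ n ih =>
    intro h s
    have hq1 : IsKernel (absorbOn p (W ∪ L)) := absorbOn_isKernel hp _
    have hq2 : IsKernel (absorbOn p T) := absorbOn_isKernel hp T
    by_cases hsTW : s ∈ T ∪ W
    · have e1 : gReachN (absorbOn p (W ∪ L)) P1 σ₁ σ₂ (T ∪ W) (n+1) h s = 1 :=
        gReachN_of_mem hsTW _ _
      have := gReachN_le_one (P1 := P1) (T := T) hp h₁ h₂ (n+1) h s
      have h2 := gReachN_nonneg (p := absorbOn p T) (P1 := P1) (T := L \ T)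
        hq2 h₁ h₂ (n+1) h s
      linarith
    · push_cast at hsTW
      have hsT : s ∉ T := fun hx => hsTW (Or.inl hx)
      have hsW : s ∉ W := fun hx => hsTW (Or.inr hx)
      by_cases hsL : s ∈ L
      · have e2 : gReachN (absorbOn p T) P1 σ₁ σ₂ (L \ T) (n+1) h s = 1 :=
          gReachN_of_mem (show s ∈ L \ T from ⟨hsL, hsT⟩) _ _
        have := gReachN_le_one (P1 := P1) (T := T) hp h₁ h₂ (n+1) h s
        have h1 := gReachN_nonneg (p := absorbOn p (W ∪ L)) (P1 := P1) (T := T ∪ W)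
          hq1 h₁ h₂ (n+1) h s
        linarith
      · have hsC : s ∉ W ∪ L := fun hx => hx.elim hsW hsL
        simp only [gReachN, hsT, hsTW, if_false, show (s ∈ L \ T) = False by simp [hsL],
          if_false]
        rw [← Finset.sum_add_distrib]
        apply Finset.sum_le_sum
        intro a _
        rw [← mul_add]
        apply mul_le_mul_of_nonneg_left _ (mix_nonneg h₁ h₂ s _ a)
        rw [absorbOn_eq_of_not_mem hsC, absorbOn_eq_of_not_mem hsT]
        rw [← Finset.sum_add_distrib]
        apply Finset.sum_le_sum
        intro s' _
        rw [← mul_add]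
        exact mul_le_mul_of_nonneg_left (ih _ _) ((hp s a).1 s')

/-- exchange of finite weighted sum and monotone sup -/
lemma sum_mul_ciSup {ι : Type*} [Fintype ι] (c : ι → ℝ) (hc : ∀ i, 0 ≤ c i)
    (f : ι → ℕ → ℝ) (hmono : ∀ i, Monotone (f i)) (hbd : ∀ i n, f i n ≤ 1)
    (hlb : ∀ i n, 0 ≤ f i n) :
    ∑ i, c i * (⨆ n, f i n) = ⨆ n, ∑ i, c i * f i n := by
  have hbdd : ∀ i, BddAbove (Set.range (f i)) :=
    fun i => ⟨1, by rintro x ⟨n, rfl⟩; exact hbd i n⟩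
  have ht : ∀ i, Filter.Tendsto (f i) Filter.atTop (nhds (⨆ n, f i n)) :=
    fun i => tendsto_atTop_ciSup (hmono i) (hbdd i)
  have hts : Filter.Tendsto (fun n => ∑ i, c i * f i n) Filter.atTop
      (nhds (∑ i, c i * (⨆ n, f i n))) := by
    apply tendsto_finset_sum
    intro i _
    exact (ht i).const_mul (c i)
  have hmono' : Monotone (fun n => ∑ i, c i * f i n) := by
    intro m n hmn
    apply Finset.sum_le_sum
    intro i _
    exact mul_le_mul_of_nonneg_left (hmono i hmn) (hc i)
  have hbdd' : BddAbove (Set.range (fun n => ∑ i, c i * f i n)) := by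
    refine ⟨∑ i, c i, ?_⟩
    rintro x ⟨n, rfl⟩
    apply Finset.sum_le_sum
    intro i _
    calc c i * f i n ≤ c i * 1 := mul_le_mul_of_nonneg_left (hbd i n) (hc i)
      _ = c i := mul_one _
  have hts' : Filter.Tendsto (fun n => ∑ i, c i * f i n) Filter.atTop
      (nhds (⨆ n, ∑ i, c i * f i n)) := tendsto_atTop_ciSup hmono' hbdd'
  exact tendsto_nhds_unique hts hts'

end Helpers3

section Switch
variable {S A : Type*} [Fintype S] [Fintype A]

/-- does the list end with an element of `X`? -/
def EndsIn {S : Type*} (X : Set S) (g : List S) : Prop := ∃ h' l, g = h' ++ [l] ∧ l ∈ X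

lemma endsIn_concat_iff {X : Set S} {h : List S} {s : S} :
    EndsIn X (h ++ [s]) ↔ s ∈ X := by
  constructor
  · rintro ⟨h', l, e, hl⟩
    have : some s = some l := by
      rw [← (List.getLast?_concat : (h ++ [s]).getLast? = some s), e, List.getLast?_concat]
    cases this; exact hl
  · intro hs; exact ⟨h, s, rfl, hs⟩

lemma not_endsIn_nil {X : Set S} : ¬ EndsIn X [] := by
  rintro ⟨h', l, e, -⟩
  have := congrArg List.length e
  simp at this

/-- a policy that switches at the first time a prefix satisfies `HP` -/
noncomputable def switchPol (HP : List S → Prop) (τ : List S → S → (List S → A → ℝ))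
    (σ : List S → A → ℝ) (d : S) : List S → A → ℝ :=
  fun g => if hx : ∃ k, k ≤ g.length ∧ HP (g.take k) then
    τ (g.take (Nat.find hx - 1)) ((g.drop (Nat.find hx - 1)).headD d)
      (g.drop (Nat.find hx - 1)) else σ g

lemma switchPol_isPolicy {HP : List S → Prop} {τ : List S → S → (List S → A → ℝ)}
    {σ : List S → A → ℝ} {d : S} (hτ : ∀ h' w, IsPolicy (τ h' w)) (hσ : IsPolicy σ) :
    IsPolicy (switchPol HP τ σ d) := by
  intro g
  unfold switchPol
  split
  · exact hτ _ _ _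
  · exact hσ g

lemma switchPol_eq_of_fresh {HP : List S → Prop} {τ : List S → S → (List S → A → ℝ)}
    {σ : List S → A → ℝ} {d : S} {g : List S}
    (hf : ∀ k, k ≤ g.length → ¬ HP (g.take k)) :
    switchPol HP τ σ d g = σ g := by
  unfold switchPol
  rw [dif_neg]
  rintro ⟨k, hk, hHP⟩
  exact hf k hk hHP

lemma take_concat_self (h : List S) (s : S) (rest : List S) :
    (h ++ s :: rest).take (h.length + 1) = h ++ [s] := by
  have e : h ++ s :: rest = (h ++ [s]) ++ rest := by simp
  have : (h ++ [s]).length = h.length + 1 := by simp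
  rw [e, ← this, List.take_left]

lemma switchPol_eval {HP : List S → Prop} {τ : List S → S → (List S → A → ℝ)}
    {σ : List S → A → ℝ} {d : S} {h : List S} {s : S} (rest : List S)
    (hf : ∀ k, k ≤ h.length → ¬ HP (h.take k)) (hHP : HP (h ++ [s])) :
    switchPol HP τ σ d (h ++ s :: rest) = τ h s (s :: rest) := by
  set g := h ++ s :: rest with hg
  have hlen : g.length = h.length + 1 + rest.length := by simp [hg]; omega
  have htake : g.take (h.length + 1) = h ++ [s] := take_concat_self h s rest
  have hx : ∃ k, k ≤ g.length ∧ HP (g.take k) :=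
    ⟨h.length + 1, by omega, by rw [htake]; exact hHP⟩
  have hfind : Nat.find hx = h.length + 1 := by
    rw [Nat.find_eq_iff]
    refine ⟨⟨by omega, by rw [htake]; exact hHP⟩, ?_⟩
    intro m hm
    rintro ⟨hmle, hHPm⟩
    have hm' : m ≤ h.length := by omega
    have : g.take m = h.take m := by
      rw [hg, show h ++ s :: rest = h ++ (s :: rest) from rfl,
        List.take_append_of_le_length hm']
    rw [this] at hHPm
    exact hf m (by omega) hHPm
  unfold switchPol
  rw [dif_pos hx, hfind]
  have h1 : g.take (h.length + 1 - 1) = h := by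
    simp only [Nat.add_sub_cancel, hg]
    exact List.take_left
  have h2 : g.drop (h.length + 1 - 1) = s :: rest := by
    simp only [Nat.add_sub_cancel, hg]
    exact List.drop_left
  rw [h1, h2]
  simp

lemma fresh_snoc {HP : List S → Prop} {h : List S} {s : S}
    (hf : ∀ k, k ≤ h.length → ¬ HP (h.take k)) (hs : ¬ HP (h ++ [s])) :
    ∀ k, k ≤ (h ++ [s]).length → ¬ HP ((h ++ [s]).take k) := by
  intro k hk
  simp only [List.length_append, List.length_singleton] at hk
  rcases Nat.lt_or_ge k (h.length + 1) with hlt | hge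
  · have hk' : k ≤ h.length := by omega
    rw [List.take_append_of_le_length hk']
    exact hf k hk'
  · have : k = h.length + 1 := by omega
    subst this
    rw [take_concat_self h s []] <;> try skip
    · exact hs

lemma shiftPolicy {σ : List S → A → ℝ} (hσ : IsPolicy σ) (h : List S) :
    IsPolicy (fun g => σ (h ++ g)) := fun g => hσ (h ++ g)

lemma weighted_one_sub {ι : Type*} [Fintype ι] (c : ι → ℝ) (hc : ∑ i, c i = 1)
    (x : ι → ℝ) (ε : ℝ) :
    ∑ i, c i * (1 - ε * x i) = 1 - ε * ∑ i, c i * x i := by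
  have e : ∀ i, c i * (1 - ε * x i) = c i - ε * (c i * x i) := fun i => by ring
  rw [Finset.sum_congr rfl fun i _ => e i, Finset.sum_sub_distrib, hc, ← Finset.mul_sum]

end Switch
/-- Implicit slicing preserves winning regions: if `W` is contained in the
winning region of the belief support game and `L` is disjoint from it, then
the winning region equals that of the game where all states of `W ∪ L` are
made absorbing, with target `T ∪ W`. -/
theorem implicit_slicing_preserves_winning {S A : Type*} [Fintype S] [Fintype A]
    (p : S → A → S → ℝ) (hp : IsKernel p) (P1 : Set S) (T W L : Set S)
    (hW : W ⊆ GWin (A := A) p P1 T)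
    (hL : L ∩ GWin (A := A) p P1 T = ∅) :
    GWin (A := A) p P1 T = GWin (A := A) (absorbOn p (W ∪ L)) P1 (T ∪ W) := by
  have hLG : ∀ x, x ∈ L → x ∉ GWin (A := A) p P1 T := by
    intro x hx hG
    have hmem : x ∈ L ∩ GWin (A := A) p P1 T := ⟨hx, hG⟩
    rw [hL] at hmem; exact hmem
  have hp' : IsKernel (absorbOn p (W ∪ L)) := absorbOn_isKernel hp _
  apply Set.eq_of_subset_of_subset
  · -- ⊆ : original winning implies sliced winning
    intro s₀ hs₀
    obtain ⟨σ₁, hσ₁, hwin⟩ := hs₀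
    refine ⟨σ₁, hσ₁, ?_⟩
    intro σ₂ hσ₂
    by_contra hne
    have hsuple : (⨆ n, gReachN (absorbOn p (W ∪ L)) P1 σ₁ σ₂ (T ∪ W) n [] s₀) ≤ 1 :=
      gReachN_iSup_le_one hp' hσ₁ hσ₂ [] s₀
    have hlt : (⨆ n, gReachN (absorbOn p (W ∪ L)) P1 σ₁ σ₂ (T ∪ W) n [] s₀) < 1 :=
      lt_of_le_of_ne hsuple hne
    set B := ⨆ n, gReachN (absorbOn p (W ∪ L)) P1 σ₁ σ₂ (T ∪ W) n [] s₀ with hB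
    have h1 : (⨆ n, gReachN p P1 σ₁ σ₂ T n [] s₀) = 1 := hwin σ₂ hσ₂
    have hn₀ : ∃ n, B < gReachN p P1 σ₁ σ₂ T n [] s₀ := by
      by_contra hcn
      push_neg at hcn
      have hle := ciSup_le hcn
      rw [h1] at hle
      exact absurd (lt_of_lt_of_le hlt hle) (lt_irrefl _)
    obtain ⟨n₀, hn₀⟩ := hn₀
    set c := gReachN (absorbOn p T) P1 σ₁ σ₂ (L \ T) n₀ [] s₀ with hc
    have hcpos : 0 < c := by
      have hcomp := gReachN_compare (P1 := P1) (T := T) hp hσ₁ hσ₂ W L n₀ [] s₀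
      have hgle : gReachN (absorbOn p (W ∪ L)) P1 σ₁ σ₂ (T ∪ W) n₀ [] s₀ ≤ B :=
        le_ciSup (gReachN_bddAbove hp' hσ₁ hσ₂ [] s₀) n₀
      rw [hc]
      linarith
    have hLTne : ∃ l, l ∈ L ∧ l ∉ T := by
      by_contra hcn
      push_neg at hcn
      have hnot : ∀ x, x ∉ L \ T := fun x hx => hx.2 (hcn x hx.1)
      rw [hc, gReachN_target_empty hnot n₀ [] s₀] at hcpos
      exact lt_irrefl _ hcpos
    obtain ⟨l₀, hl₀L, hl₀T⟩ := hLTne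
    -- spoiler policies for states of L ∖ T
    have hchoice : ∀ (h' : List S) (l : S), ∃ τ : List S → A → ℝ, IsPolicy τ ∧
        (l ∈ L → l ∉ T →
          (⨆ m, gReachN p P1 (fun g => σ₁ (h' ++ g)) τ T m [] l) < 1) := by
      intro h' l
      by_cases hl : l ∈ L
      · have hlG := hLG l hl
        simp only [GWin, Set.mem_setOf_eq] at hlG
        push_neg at hlG
        obtain ⟨τ, hτpol, hτ⟩ := hlG (fun g => σ₁ (h' ++ g)) (shiftPolicy hσ₁ h')
        refine ⟨τ, hτpol, fun _ _ => lt_of_le_of_ne ?_ hτ⟩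
        exact gReachN_iSup_le_one hp (shiftPolicy hσ₁ h') hτpol [] l
      · exact ⟨σ₂, hσ₂, fun hA _ => absurd hA hl⟩
    choose τ₂ hτ₂pol hτ₂lt using hchoice
    have hεex : ∃ ε : ℝ, 0 < ε ∧ ε ≤ 1 ∧ ∀ (h' : List S) (l : S),
        h'.length ≤ n₀ → l ∈ L → l ∉ T →
        (⨆ m, gReachN p P1 (fun g => σ₁ (h' ++ g)) (τ₂ h' l) T m [] l) ≤ 1 - ε := by
      set v : List S → S → ℝ :=
        fun h' l => ⨆ m, gReachN p P1 (fun g => σ₁ (h' ++ g)) (τ₂ h' l) T m [] l with hv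
      have hvnn : ∀ (h' : List S) (l : S), 0 ≤ v h' l := fun h' l =>
        le_trans (gReachN_nonneg hp (shiftPolicy hσ₁ h') (hτ₂pol h' l) 0 [] l)
          (le_ciSup (gReachN_bddAbove hp (shiftPolicy hσ₁ h') (hτ₂pol h' l) [] l) 0)
      set Hfin : Finset (List S × S) :=
        ((List.finite_length_le S n₀).toFinset ×ˢ
          (Finset.univ.filter fun l => l ∈ L ∧ l ∉ T)) with hHfin
      have hHne : Hfin.Nonempty := ⟨([], l₀), by simp [hHfin, hl₀L, hl₀T]⟩
      refine ⟨Hfin.inf' hHne (fun q => 1 - v q.1 q.2), ?_, ?_, ?_⟩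
      · rw [Finset.lt_inf'_iff]
        rintro ⟨h', l⟩ hq
        simp only [hHfin, Finset.mem_product, Set.Finite.mem_toFinset, Set.mem_setOf_eq,
          Finset.mem_filter, Finset.mem_univ, true_and] at hq
        have h4 : v h' l < 1 := hτ₂lt h' l hq.2.1 hq.2.2
        show (0:ℝ) < 1 - v h' l
        linarith
      · have h5 : Hfin.inf' hHne (fun q => 1 - v q.1 q.2) ≤ 1 - v [] l₀ :=
          Finset.inf'_le (fun q : List S × S => 1 - v q.1 q.2) (b := ([], l₀))
            (by simp only [hHfin, Finset.mem_product, Set.Finite.mem_toFinset,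
              Set.mem_setOf_eq, Finset.mem_filter, Finset.mem_univ, true_and]
                exact ⟨by simp, hl₀L, hl₀T⟩)
        have h6 := hvnn [] l₀
        linarith
      · intro h' l hlen hlL hlT
        have h5 : Hfin.inf' hHne (fun q => 1 - v q.1 q.2) ≤ 1 - v h' l :=
          Finset.inf'_le (fun q : List S × S => 1 - v q.1 q.2) (b := (h', l))
            (by simp only [hHfin, Finset.mem_product, Set.Finite.mem_toFinset,
              Set.mem_setOf_eq, Finset.mem_filter, Finset.mem_univ, true_and]
                exact ⟨hlen, hlL, hlT⟩)
        have h6 : v h' l = ⨆ m, gReachN p P1 (fun g => σ₁ (h' ++ g)) (τ₂ h' l) T m [] l := rfl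
        linarith [h5, h6 ▸ h5]
    obtain ⟨ε, hεpos, hε1, hεle⟩ := hεex
    set HP1 : List S → Prop :=
      fun g => g.length ≤ n₀ + 1 ∧ EndsIn {x | x ∈ L ∧ x ∉ T} g with hHP1
    set σstar := switchPol HP1 τ₂ σ₂ s₀ with hσstar
    have hσstarpol : IsPolicy σstar := switchPol_isPolicy hτ₂pol hσ₂
    have keyL : ∀ (h : List S) (s : S), (∀ k, k ≤ h.length → ¬ HP1 (h.take k)) →
        h.length ≤ n₀ → s ∈ L → s ∉ T → ∀ m,
          gReachN p P1 σ₁ σstar T m h s ≤ 1 - ε := by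
      intro h s hf hlen hsL hsT m
      have hHPhs : HP1 (h ++ [s]) :=
        ⟨by simp; omega, endsIn_concat_iff.mpr ⟨hsL, hsT⟩⟩
      have e0 : gReachN p P1 σ₁ σstar T m h s
          = gReachN p P1 (fun g => σ₁ (h ++ g)) (τ₂ h s) T m [] s := by
        have e1 : gReachN p P1 σ₁ σstar T m h s
            = gReachN p P1 (fun g => σ₁ (h ++ g)) (fun g => σstar (h ++ g)) T m [] s := by
          conv_lhs => rw [show h = h ++ ([] : List S) by simp]
          exact gReachN_shift m h [] s
        rw [e1]
        apply gReachN_congr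
        · intro g _ _; rfl
        · intro g hpre _
          obtain ⟨t, rfl⟩ := hpre
          show σstar (h ++ ([] ++ [s] ++ t)) = τ₂ h s ([] ++ [s] ++ t)
          simp only [List.nil_append]
          exact switchPol_eval (HP := HP1) (τ := τ₂) (σ := σ₂) (d := s₀) t hf hHPhs
      rw [e0]
      have hle : gReachN p P1 (fun g => σ₁ (h ++ g)) (τ₂ h s) T m [] s
          ≤ ⨆ m, gReachN p P1 (fun g => σ₁ (h ++ g)) (τ₂ h s) T m [] s :=
        le_ciSup (gReachN_bddAbove hp (shiftPolicy hσ₁ h) (hτ₂pol h s) [] s) m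
      have h2 := hεle h s hlen hsL hsT
      linarith
    -- main inductive claim
    have claim : ∀ (n : ℕ) (m : ℕ) (h : List S) (s : S), h.length + n ≤ n₀ →
        (∀ k, k ≤ h.length → ¬ HP1 (h.take k)) →
        gReachN p P1 σ₁ σstar T m h s
          ≤ 1 - ε * gReachN (absorbOn p T) P1 σ₁ σstar (L \ T) n h s := by
      intro n
      induction n with
      | zero =>
        intro m h s hlen hf
        by_cases hsLT : s ∈ L ∧ s ∉ T
        · have e1 : gReachN (absorbOn p T) P1 σ₁ σstar (L \ T) 0 h s = 1 :=
            gReachN_of_mem (show s ∈ L \ T from hsLT) 0 h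
          rw [e1, mul_one]
          exact keyL h s hf (by omega) hsLT.1 hsLT.2 m
        · have e1 : gReachN (absorbOn p T) P1 σ₁ σstar (L \ T) 0 h s = 0 := by
            simp only [gReachN]
            rw [if_neg]
            intro hx
            exact hsLT ⟨hx.1, hx.2⟩
          rw [e1, mul_zero, sub_zero]
          exact gReachN_le_one hp hσ₁ hσstarpol m h s
      | succ n ih =>
        intro m h s hlen hf
        by_cases hsT : s ∈ T
        · have e1 : gReachN (absorbOn p T) P1 σ₁ σstar (L \ T) (n+1) h s = 0 :=
            gReachN_absorb_zero hσ₁ hσstarpol hsT (fun hx => hx.2 hsT) (n+1) h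
          rw [e1, mul_zero, sub_zero]
          exact gReachN_le_one hp hσ₁ hσstarpol m h s
        · by_cases hsL : s ∈ L
          · have e1 : gReachN (absorbOn p T) P1 σ₁ σstar (L \ T) (n+1) h s = 1 :=
              gReachN_of_mem (show s ∈ L \ T from ⟨hsL, hsT⟩) (n+1) h
            rw [e1, mul_one]
            exact keyL h s hf (by omega) hsL hsT m
          · have hsLT' : s ∉ L \ T := fun hx => hsL hx.1
            have hKle1 : gReachN (absorbOn p T) P1 σ₁ σstar (L \ T) (n+1) h s ≤ 1 :=
              gReachN_le_one (absorbOn_isKernel hp T) hσ₁ hσstarpol (n+1) h s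
            have hKnn : (0:ℝ) ≤ gReachN (absorbOn p T) P1 σ₁ σstar (L \ T) (n+1) h s :=
              gReachN_nonneg (absorbOn_isKernel hp T) hσ₁ hσstarpol (n+1) h s
            cases m with
            | zero =>
              have e1 : gReachN p P1 σ₁ σstar T 0 h s = 0 := by
                simp [gReachN, hsT]
              rw [e1]
              nlinarith
            | succ m =>
              have hfresh' : ∀ k, k ≤ (h ++ [s]).length → ¬ HP1 ((h ++ [s]).take k) := by
                apply fresh_snoc hf
                rintro ⟨-, hend⟩
                rcases endsIn_concat_iff.mp hend with ⟨hx1, hx2⟩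
                exact hsL hx1
              have eL : gReachN p P1 σ₁ σstar T (m+1) h s
                  = ∑ a, (if s ∈ P1 then σ₁ (h ++ [s]) a else σstar (h ++ [s]) a) *
                      ∑ s', p s a s' * gReachN p P1 σ₁ σstar T m (h ++ [s]) s' := by
                simp only [gReachN]
                rw [if_neg hsT]
              have eK : gReachN (absorbOn p T) P1 σ₁ σstar (L \ T) (n+1) h s
                  = ∑ a, (if s ∈ P1 then σ₁ (h ++ [s]) a else σstar (h ++ [s]) a) *
                      ∑ s', p s a s' *
                        gReachN (absorbOn p T) P1 σ₁ σstar (L \ T) n (h ++ [s]) s' := by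
                simp only [gReachN]
                rw [if_neg hsLT']
                apply Finset.sum_congr rfl
                intro a _
                rw [absorbOn_eq_of_not_mem hsT]
              rw [eL, eK]
              calc ∑ a, (if s ∈ P1 then σ₁ (h ++ [s]) a else σstar (h ++ [s]) a) *
                    ∑ s', p s a s' * gReachN p P1 σ₁ σstar T m (h ++ [s]) s'
                  ≤ ∑ a, (if s ∈ P1 then σ₁ (h ++ [s]) a else σstar (h ++ [s]) a) *
                    ∑ s', p s a s' *
                      (1 - ε * gReachN (absorbOn p T) P1 σ₁ σstar (L \ T) n (h ++ [s]) s') := by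
                    apply Finset.sum_le_sum
                    intro a _
                    apply mul_le_mul_of_nonneg_left _ (mix_nonneg hσ₁ hσstarpol s _ a)
                    apply Finset.sum_le_sum
                    intro s' _
                    exact mul_le_mul_of_nonneg_left
                      (ih m (h ++ [s]) s' (by simp at hlen ⊢; omega) hfresh') ((hp s a).1 s')
                _ = ∑ a, (if s ∈ P1 then σ₁ (h ++ [s]) a else σstar (h ++ [s]) a) *
                    (1 - ε * ∑ s', p s a s' *
                      gReachN (absorbOn p T) P1 σ₁ σstar (L \ T) n (h ++ [s]) s') := by
                    apply Finset.sum_congr rfl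
                    intro a _
                    rw [weighted_one_sub (p s a) ((hp s a).2)]
                _ = 1 - ε * ∑ a, (if s ∈ P1 then σ₁ (h ++ [s]) a else σstar (h ++ [s]) a) *
                    ∑ s', p s a s' *
                      gReachN (absorbOn p T) P1 σ₁ σstar (L \ T) n (h ++ [s]) s' :=
                    weighted_one_sub _ (mix_sum hσ₁ hσstarpol s _) _ _
    -- transfer c to the switched adversary and conclude
    have hfreshnil : ∀ k, k ≤ ([] : List S).length → ¬ HP1 (([] : List S).take k) := by
      intro k hk
      have hk0 : k = 0 := by simpa using hk
      subst hk0
      rintro ⟨-, hend⟩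
      exact not_endsIn_nil hend
    have hKeq : gReachN (absorbOn p T) P1 σ₁ σstar (L \ T) n₀ [] s₀ = c := by
      rw [hc]
      apply gReachN_congr
      · intro g _ _; rfl
      · intro g _ hdrop
        apply switchPol_eq_of_fresh
        intro k hk
        rintro ⟨-, h', l, hgl, hlL, hlT⟩
        have hmem : l ∈ g := by
          apply List.take_subset k
          rw [hgl]
          simp
        have := hdrop l (by simpa using hmem)
        exact this ⟨hlL, hlT⟩
    have hsup1 : (⨆ m, gReachN p P1 σ₁ σstar T m [] s₀) = 1 := hwin σstar hσstarpol
    have hle : (⨆ m, gReachN p P1 σ₁ σstar T m [] s₀) ≤ 1 - ε * c := by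
      apply ciSup_le
      intro m
      have := claim n₀ m [] s₀ (by simp) hfreshnil
      rw [hKeq] at this
      exact this
    rw [hsup1] at hle
    nlinarith
  · -- ⊇ : sliced winning implies original winning
    intro s₀ hs₀
    obtain ⟨σ₁, hσ₁, hwin⟩ := hs₀
    have hTG : ∀ x, x ∈ T → x ∈ GWin (A := A) p P1 T := by
      intro x hx
      refine ⟨σ₁, hσ₁, fun σ₂ hσ₂ => ?_⟩
      simp only [gReachN_of_mem hx]
      exact ciSup_const
    have hLT : ∀ x, x ∈ L → x ∉ T := fun x hx ht => hLG x hx (hTG x ht)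
    have hLW : ∀ x, x ∈ L → x ∉ W := fun x hx hw => hLG x hx (hW hw)
    -- winning policies for states of the original winning region
    have hτ : ∀ w : S, ∃ τ : List S → A → ℝ, IsPolicy τ ∧
        (w ∈ GWin (A := A) p P1 T → ∀ σ₂' : List S → A → ℝ, IsPolicy σ₂' →
          (⨆ m, gReachN p P1 τ σ₂' T m [] w) = 1) := by
      intro w
      by_cases hw : w ∈ GWin (A := A) p P1 T
      · obtain ⟨τ, h1, h2⟩ := hw
        exact ⟨τ, h1, fun _ => h2⟩
      · exact ⟨σ₁, hσ₁, fun h => absurd h hw⟩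
    choose τ₁ hτ₁pol hτ₁win using hτ
    set HP2 : List S → Prop := fun g => EndsIn {x | x ∈ W ∧ x ∉ T} g with hHP2
    set σstar := switchPol HP2 (fun _ w => τ₁ w) σ₁ s₀ with hσstar
    have hσstarpol : IsPolicy σstar := switchPol_isPolicy (fun _ w => hτ₁pol w) hσ₁
    refine ⟨σstar, hσstarpol, ?_⟩
    intro σ₂ hσ₂
    have hVle1 : ∀ (h : List S) (s : S), (⨆ m, gReachN p P1 σstar σ₂ T m h s) ≤ 1 :=
      fun h s => gReachN_iSup_le_one hp hσstarpol hσ₂ h s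
    have hVbdd : ∀ (h : List S) (s : S),
        BddAbove (Set.range fun m => gReachN p P1 σstar σ₂ T m h s) :=
      fun h s => gReachN_bddAbove hp hσstarpol hσ₂ h s
    have hVnn : ∀ (h : List S) (s : S), 0 ≤ ⨆ m, gReachN p P1 σstar σ₂ T m h s :=
      fun h s => le_trans (gReachN_nonneg hp hσstarpol hσ₂ 0 h s) (le_ciSup (hVbdd h s) 0)
    -- at fresh W∖T states the value is 1
    have keyW : ∀ (h : List S) (s : S), (∀ k, k ≤ h.length → ¬ HP2 (h.take k)) →
        s ∈ W → s ∉ T → (⨆ m, gReachN p P1 σstar σ₂ T m h s) = 1 := by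
      intro h s hf hsW hsT
      have hHPhs : HP2 (h ++ [s]) := endsIn_concat_iff.mpr ⟨hsW, hsT⟩
      have h1 : ∀ m, gReachN p P1 σstar σ₂ T m h s
          = gReachN p P1 (τ₁ s) (fun g => σ₂ (h ++ g)) T m [] s := by
        intro m
        have e0 : gReachN p P1 σstar σ₂ T m h s
            = gReachN p P1 (fun g => σstar (h ++ g)) (fun g => σ₂ (h ++ g)) T m [] s := by
          conv_lhs => rw [show h = h ++ ([] : List S) by simp]
          exact gReachN_shift m h [] s
        rw [e0]
        apply gReachN_congr
        · intro g hpre _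
          obtain ⟨t, rfl⟩ := hpre
          show σstar (h ++ ([] ++ [s] ++ t)) = τ₁ s ([] ++ [s] ++ t)
          simp only [List.nil_append]
          have := switchPol_eval (HP := HP2) (τ := fun _ w => τ₁ w) (σ := σ₁)
            (d := s₀) (h := h) (s := s) t hf hHPhs
          exact this
        · intro g _ _; rfl
      simp only [h1]
      exact hτ₁win s (hW hsW) _ (shiftPolicy hσ₂ h)
    -- Bellman super-property of the value
    have hstep : ∀ (h : List S) (s : S), s ∉ T →
        (∑ a, (if s ∈ P1 then σstar (h ++ [s]) a else σ₂ (h ++ [s]) a) *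
          ∑ s', p s a s' * ⨆ m, gReachN p P1 σstar σ₂ T m (h ++ [s]) s')
          ≤ ⨆ m, gReachN p P1 σstar σ₂ T m h s := by
      intro h s hsT
      have inner : ∀ a, (∑ s', p s a s' * ⨆ m, gReachN p P1 σstar σ₂ T m (h ++ [s]) s')
          = ⨆ m, ∑ s', p s a s' * gReachN p P1 σstar σ₂ T m (h ++ [s]) s' := by
        intro a
        exact sum_mul_ciSup (p s a) ((hp s a).1)
          (fun s' m => gReachN p P1 σstar σ₂ T m (h ++ [s]) s')
          (fun s' => gReachN_mono hp hσstarpol hσ₂ _ s')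
          (fun s' m => gReachN_le_one hp hσstarpol hσ₂ m _ s')
          (fun s' m => gReachN_nonneg hp hσstarpol hσ₂ m _ s')
      rw [Finset.sum_congr rfl fun a _ => by rw [inner a]]
      have outer : (∑ a, (if s ∈ P1 then σstar (h ++ [s]) a else σ₂ (h ++ [s]) a) *
          ⨆ m, ∑ s', p s a s' * gReachN p P1 σstar σ₂ T m (h ++ [s]) s')
          = ⨆ m, ∑ a, (if s ∈ P1 then σstar (h ++ [s]) a else σ₂ (h ++ [s]) a) *
            ∑ s', p s a s' * gReachN p P1 σstar σ₂ T m (h ++ [s]) s' := by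
        apply sum_mul_ciSup _ (fun a => mix_nonneg hσstarpol hσ₂ s _ a)
        · intro a m1 m2 hm
          apply Finset.sum_le_sum
          intro s' _
          exact mul_le_mul_of_nonneg_left
            (gReachN_mono hp hσstarpol hσ₂ _ s' hm) ((hp s a).1 s')
        · intro a m
          calc ∑ s', p s a s' * gReachN p P1 σstar σ₂ T m (h ++ [s]) s'
              ≤ ∑ s', p s a s' * 1 := Finset.sum_le_sum fun s' _ =>
                mul_le_mul_of_nonneg_left (gReachN_le_one hp hσstarpol hσ₂ m _ s')
                  ((hp s a).1 s')
            _ = 1 := by simp [(hp s a).2]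
        · intro a m
          exact Finset.sum_nonneg fun s' _ => mul_nonneg ((hp s a).1 s')
            (gReachN_nonneg hp hσstarpol hσ₂ m _ s')
      rw [outer]
      apply ciSup_le
      intro m
      have hm1 : (∑ a, (if s ∈ P1 then σstar (h ++ [s]) a else σ₂ (h ++ [s]) a) *
          ∑ s', p s a s' * gReachN p P1 σstar σ₂ T m (h ++ [s]) s')
          = gReachN p P1 σstar σ₂ T (m + 1) h s := by
        simp only [gReachN, hsT, if_false]
      rw [hm1]
      exact le_ciSup (hVbdd h s) (m + 1)
    -- the main inductive claim
    have claim2 : ∀ (n : ℕ) (h : List S) (s : S), (∀ k, k ≤ h.length → ¬ HP2 (h.take k)) →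
        gReachN (absorbOn p (W ∪ L)) P1 σ₁ σ₂ (T ∪ W) n h s
          ≤ ⨆ m, gReachN p P1 σstar σ₂ T m h s := by
      intro n
      induction n with
      | zero =>
        intro h s hf
        by_cases hsT : s ∈ T
        · have : (⨆ m, gReachN p P1 σstar σ₂ T m h s) = 1 := by
            simp only [gReachN_of_mem hsT]; exact ciSup_const
          rw [this]
          exact gReachN_le_one hp' hσ₁ hσ₂ 0 h s
        · by_cases hsW : s ∈ W
          · rw [keyW h s hf hsW hsT]
            exact gReachN_le_one hp' hσ₁ hσ₂ 0 h s
          · have : s ∉ T ∪ W := fun hx => hx.elim hsT hsW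
            simp only [gReachN, this, if_false]
            exact hVnn h s
      | succ n ih =>
        intro h s hf
        by_cases hsT : s ∈ T
        · have : (⨆ m, gReachN p P1 σstar σ₂ T m h s) = 1 := by
            simp only [gReachN_of_mem hsT]; exact ciSup_const
          rw [this]
          exact gReachN_le_one hp' hσ₁ hσ₂ (n+1) h s
        · by_cases hsW : s ∈ W
          · rw [keyW h s hf hsW hsT]
            exact gReachN_le_one hp' hσ₁ hσ₂ (n+1) h s
          · have hsTW : s ∉ T ∪ W := fun hx => hx.elim hsT hsW
            by_cases hsL : s ∈ L
            · rw [gReachN_absorb_zero hσ₁ hσ₂ (Or.inr hsL) hsTW (n+1) h]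
              exact hVnn h s
            · have hsC : s ∉ W ∪ L := fun hx => hx.elim hsW hsL
              have hfresh' : ∀ k, k ≤ (h ++ [s]).length → ¬ HP2 ((h ++ [s]).take k) := by
                apply fresh_snoc hf
                intro hHP
                rcases endsIn_concat_iff.mp hHP with ⟨h1, _⟩
                exact hsW h1
              have hσeq : σstar (h ++ [s]) = σ₁ (h ++ [s]) :=
                switchPol_eq_of_fresh hfresh'
              simp only [gReachN, hsTW, if_false]
              calc ∑ a, (if s ∈ P1 then σ₁ (h ++ [s]) a else σ₂ (h ++ [s]) a) *
                    ∑ s', absorbOn p (W ∪ L) s a s' *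
                      gReachN (absorbOn p (W ∪ L)) P1 σ₁ σ₂ (T ∪ W) n (h ++ [s]) s'
                  ≤ ∑ a, (if s ∈ P1 then σ₁ (h ++ [s]) a else σ₂ (h ++ [s]) a) *
                    ∑ s', p s a s' * ⨆ m, gReachN p P1 σstar σ₂ T m (h ++ [s]) s' := by
                    apply Finset.sum_le_sum
                    intro a _
                    apply mul_le_mul_of_nonneg_left _ (mix_nonneg hσ₁ hσ₂ s _ a)
                    rw [absorbOn_eq_of_not_mem hsC]
                    apply Finset.sum_le_sum
                    intro s' _
                    exact mul_le_mul_of_nonneg_left (ih (h ++ [s]) s' hfresh')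
                      ((hp s a).1 s')
                _ = ∑ a, (if s ∈ P1 then σstar (h ++ [s]) a else σ₂ (h ++ [s]) a) *
                    ∑ s', p s a s' * ⨆ m, gReachN p P1 σstar σ₂ T m (h ++ [s]) s' := by
                    rw [hσeq]
                _ ≤ ⨆ m, gReachN p P1 σstar σ₂ T m h s := hstep h s hsT
    -- conclude
    have hfreshnil : ∀ k, k ≤ ([] : List S).length → ¬ HP2 (([] : List S).take k) := by
      intro k hk
      have hk0 : k = 0 := by simpa using hk
      subst hk0
      simpa using not_endsIn_nil (X := {x | x ∈ W ∧ x ∉ T})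
    have h1 : (1 : ℝ) = ⨆ n, gReachN (absorbOn p (W ∪ L)) P1 σ₁ σ₂ (T ∪ W) n [] s₀ :=
      (hwin σ₂ hσ₂).symm
    apply le_antisymm (hVle1 [] s₀)
    rw [h1]
    exact ciSup_le fun n => claim2 n [] s₀ hfreshnil
end

section
/- In the MEMDP family 𝒩ⁿ of the exponential-memory witness, the map π ↦ B_π from the 2ⁿ paths of the first phase ending in state s_n to their consistent environment sets is injective, and |B_π| = n for every such path; consequently there are 2ⁿ distinct consistent environment sets at s_n. -/
open scoped Classical

/-- First-phase transition probabilities of the exponential-memory witness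
MEMDP `𝒩ⁿ`, with the `2n` environments encoded as pairs `(j₀, b₀) : Fin n × Bool`:
from `s_{j-1}`, environment `(j₀, b₀)` forces the choice `b₀` at stage `j₀`
(probability `1` for `c = b₀`, `0` otherwise) and is uniform (`1/2`) at all
other stages. A choice `c : Bool` stands for moving to `a_j` (`false`)
or `b_j` (`true`). -/
noncomputable def pstep (n : ℕ) (e : Fin n × Bool) (j : Fin n) (c : Bool) : ℝ :=
  if j = e.1 then (if c = e.2 then 1 else 0) else 1 / 2

/-- The set of environments consistent with the first-phase path determined by
the stagewise choices `c : Fin n → Bool`. -/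
noncomputable def consistentEnvs (n : ℕ) (c : Fin n → Bool) : Finset (Fin n × Bool) :=
  Finset.univ.filter (fun e => ∀ j : Fin n, 0 < pstep n e j (c j))

/-- In the exponential-memory witness `𝒩ⁿ`, the map `π ↦ B_π` from the `2ⁿ`
first-phase paths (stagewise choices) to their consistent environment sets is
injective, each `B_π` has exactly `n` elements, and consequently there are
`2ⁿ` distinct consistent environment sets at `s_n`. -/
theorem exponential_witness_consistent_sets (n : ℕ) :
    Function.Injective (consistentEnvs n) ∧
      (∀ c : Fin n → Bool, (consistentEnvs n c).card = n) ∧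
      Set.ncard (Set.range (consistentEnvs n)) = 2 ^ n := by
  have hmem : ∀ (c : Fin n → Bool) (e : Fin n × Bool),
      e ∈ consistentEnvs n c ↔ c e.1 = e.2 := by
    intro c e
    simp only [consistentEnvs, Finset.mem_filter, Finset.mem_univ, true_and]
    constructor
    · intro h
      have := h e.1
      simp only [pstep, if_pos rfl] at this
      by_contra hne
      simp [hne] at this
    · intro h j
      unfold pstep
      by_cases hj : j = e.1
      · subst hj; simp [h]
      · simp [hj]
  have heq : ∀ c : Fin n → Bool,
      consistentEnvs n c = Finset.univ.image (fun j : Fin n => (j, c j)) := by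
    intro c
    ext e
    simp only [hmem, Finset.mem_image, Finset.mem_univ, true_and]
    constructor
    · intro h; exact ⟨e.1, by rw [h]⟩
    · rintro ⟨j, rfl⟩; rfl
  have hinj : Function.Injective (consistentEnvs n) := by
    intro c c' h
    funext j
    have : (j, c j) ∈ consistentEnvs n c' := by
      rw [← h, hmem]
    exact ((hmem c' (j, c j)).mp this).symm
  refine ⟨hinj, ?_, ?_⟩
  · intro c
    rw [heq, Finset.card_image_of_injective _ (fun a b hab => (Prod.mk.injEq _ _ _ _ ▸ hab).1)]
    simp
  · rw [← Set.image_univ, Set.ncard_image_of_injective _ hinj, Set.ncard_univ]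
    simp [Nat.card_eq_fintype_card]
end
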